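/- Let d ≥ 3 and I = (L(u,v)) a lexsegment ideal such that w = x_2·u/x_1, where w is the largest degree-d monomial with w <_lex v, and suppose v ≤_lex x_2^{d-1}x_n. Then for every k ≥ d, the monomial m = (x_2^{d-1}x_n)^k / x_n satisfies m ∉ I^k and x_i·m ∈ I^k for all i; hence depth(S/I^k) = 0. -/

import Mathlib

/-!
Write g = x₂^(d-1) xₙ, so that m = g^t / xₙ. Every generator of I has degree d, so I^t lives in
degree ≥ dt, while m has degree dt - 1; hence m ∉ I^t. Since x₁ divides u but not v, every
degree-d monomial not divisible by x₁ and lex-above v lies in L(u,v); this holds for g and for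
x₂^(d-1) xᵢ (i ≥ 2), which are lex-above g ≥ v, so xᵢ m = (x₂^(d-1) xᵢ) g^(t-1) ∈ I^t. For x₁ use
x₁ m = (x₁ xₙ^(d-1)) (x₂^d)^(d-1) g^(t-d), where x₁ xₙ^(d-1) ≤ u because u / x₁ ≥ xₙ^(d-1) in lex
order. So m is a nonzero socle element of S/I^t, which forces depth 0.
-/

open MvPolynomial

noncomputable section

namespace LexPaper

/-- total degree of an exponent vector -/
def deg {sigma : Type*} (a : sigma  →₀  ℕ) : ℕ := a.sum fun _ e => e

/-- the monomial x^a as an element of the polynomial ring -/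
def mon (k : Type*) [Field k] {sigma : Type*} (a : sigma  →₀  ℕ) : MvPolynomial sigma k :=
  MvPolynomial.monomial a 1

/-- `lexLe a b` : a ≤_lex b, where x_1 > x_2 > ... > x_n (index 0 is the largest variable). -/
def lexLe {n : ℕ} (a b : Fin n  →₀  ℕ) : Prop := toLex a ≤ toLex b

/-- `lexLt a b` : a <_lex b. -/
def lexLt {n : ℕ} (a b : Fin n  →₀  ℕ) : Prop := toLex a < toLex b

/-- the lexsegment set L(u,v) : all exponent vectors of degree d between v and u in lex order -/
def lexSeg {n : ℕ} (d : ℕ) (u v : Fin n  →₀  ℕ) : Set (Fin n  →₀  ℕ) :=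
  {m | deg m = d  ∧  lexLe v m  ∧  lexLe m u}

/-- the lexsegment ideal (L(u,v)) -/
def lexIdeal (k : Type*) [Field k] {n : ℕ} (d : ℕ) (u v : Fin n  →₀  ℕ) :
    Ideal (MvPolynomial (Fin n) k) :=
  Ideal.span (mon k '' lexSeg d u v)

/-- the maximal graded ideal (x_1, ..., x_n) -/
def mMax (k : Type*) [Field k] (n : ℕ) : Ideal (MvPolynomial (Fin n) k) :=
  Ideal.span (Set.range (X : Fin n -> MvPolynomial (Fin n) k))

/-- depth of S/I: the supremum of lengths of regular sequences on S/I consisting of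
elements of the maximal graded ideal -/
def quotDepth (k : Type*) [Field k] {n : ℕ} (I : Ideal (MvPolynomial (Fin n) k)) : ℕ :=
  sSup {r : ℕ | ∃ rs : List (MvPolynomial (Fin n) k), rs.length = r  ∧ 
    (∀ x ∈ rs, x ∈ mMax k n)  ∧  RingTheory.Sequence.IsRegular (MvPolynomial (Fin n) k ⧸ I) rs}

section Degree

variable {k : Type*} [Field k] {σ : Type*}

lemma deg_eq_degree (a : σ →₀ ℕ) : deg a = a.degree := rfl

lemma mon_mul (a b : σ →₀ ℕ) : mon k a * mon k b = mon k (a + b) := by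
  simp [mon, monomial_mul]

lemma mon_pow (a : σ →₀ ℕ) (c : ℕ) : mon k a ^ c = mon k (c • a) := by
  simp [mon, monomial_pow]

lemma lexIdeal_pow_le_pow_idealOfVars {n : ℕ} (d t : ℕ) (u v : Fin n →₀ ℕ) :
    lexIdeal k d u v ^ t ≤ idealOfVars (Fin n) k ^ (d * t) := by
  rw [pow_mul]
  refine Ideal.pow_right_mono (Ideal.span_le.mpr ?_) t
  rintro _ ⟨a, ha, rfl⟩
  exact (monomial_mem_pow_idealOfVars_iff d a one_ne_zero).mpr ha.1.ge

lemma mon_notMem_lexIdeal_pow {n d t : ℕ} {u v a : Fin n →₀ ℕ} (ha : deg a < d * t) :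
    mon k a ∉ lexIdeal k d u v ^ t := fun h =>
  ha.not_ge <| (monomial_mem_pow_idealOfVars_iff _ a one_ne_zero).mp
    (lexIdeal_pow_le_pow_idealOfVars d t u v h)

end Degree

lemma quotDepth_eq_zero_of_X_mul_mem {k : Type*} [Field k] {n : ℕ}
    {J : Ideal (MvPolynomial (Fin n) k)} {f : MvPolynomial (Fin n) k} (hf : f ∉ J)
    (hX : ∀ i, X i * f ∈ J) : quotDepth k J = 0 := by
  refine Nat.le_zero.mp (csSup_le' ?_)
  rintro r ⟨_ | ⟨x, xs⟩, rfl, hmem, hreg⟩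
  · rfl
  · have hx : x * f ∈ J := by
      have hcolon : mMax k n ≤ J.colon (Ideal.span {f}) :=
        Ideal.span_le.mpr <| Set.range_subset_iff.mpr fun i =>
          Ideal.mem_colon_span_singleton.mpr (hX i)
      exact Ideal.mem_colon_span_singleton.mp (hcolon (hmem x List.mem_cons_self))
    refine absurd ?_ hf
    rw [← Ideal.Quotient.eq_zero_iff_mem]
    apply ((RingTheory.Sequence.isRegular_cons_iff _ _ _).mp hreg).1
    change Ideal.Quotient.mk J (x * f) = x • 0
    rw [smul_zero, Ideal.Quotient.eq_zero_iff_mem]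
    exact hx

section Lex

variable {n : ℕ} {i0 iN : Fin n}

lemma toLex_lt_of_apply_bot_lt (h0 : IsBot i0) {a b : Fin n →₀ ℕ} (h : a i0 < b i0) :
    toLex a < toLex b :=
  Finsupp.Lex.lt_iff.mpr ⟨i0, fun j hj => absurd (h0 j) hj.not_ge, h⟩

lemma toLex_single_top_le (hN : IsTop iN) {c : ℕ} {x : Fin n →₀ ℕ} (hx : deg x = c) :
    toLex (Finsupp.single iN c) ≤ toLex x := by
  by_contra! h
  obtain ⟨j, hbefore, hj⟩ := Finsupp.Lex.lt_iff.mp h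
  have hjN : j = iN := by
    by_contra hne
    simp [Ne.symm hne] at hj
  subst hjN
  have hxj : deg x = x j := by
    rw [deg_eq_degree, Finsupp.degree_eq_sum]
    refine Finset.sum_eq_single j (fun l _ hl => ?_) (by simp)
    simpa [Finsupp.single_apply, hl] using hbefore l (lt_of_le_of_ne (hN l) hl)
  simp only [ofLex_toLex, Finsupp.single_eq_same] at hj
  omega

lemma toLex_add_single_top_le (hN : IsTop iN) (a : Fin n →₀ ℕ) (i : Fin n) (c : ℕ) :
    toLex (a + Finsupp.single iN c) ≤ toLex (a + Finsupp.single i c) := by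
  rw [toLex_add, toLex_add]
  exact add_le_add_right (toLex_single_top_le hN (Finsupp.degree_single i c)) _

end Lex

section LexSeg

variable {n d : ℕ} {i0 i1 iN : Fin n} {u v : Fin n →₀ ℕ}

lemma mem_lexSeg_of_apply_bot_eq_zero (h0 : IsBot i0) (hu0 : 0 < u i0) {a : Fin n →₀ ℕ}
    (ha : deg a = d) (hva : lexLe v a) (ha0 : a i0 = 0) : a ∈ lexSeg d u v :=
  ⟨ha, hva, (toLex_lt_of_apply_bot_lt h0 (ha0 ▸ hu0)).le⟩

lemma single_add_single_mem_lexSeg (h0 : IsBot i0) (hN : IsTop iN) (hi1 : i1 ≠ i0)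
    (hu0 : 0 < u i0) (hd : 1 ≤ d)
    (hv : lexLe v (Finsupp.single i1 (d - 1) + Finsupp.single iN 1)) {i : Fin n} (hi : i ≠ i0) :
    Finsupp.single i1 (d - 1) + Finsupp.single i 1 ∈ lexSeg d u v :=
  mem_lexSeg_of_apply_bot_eq_zero h0 hu0 (by simp only [deg_eq_degree, map_add, Finsupp.degree_single]; omega)
    (hv.trans (toLex_add_single_top_le hN _ i 1)) (by simp [hi1, hi])

lemma single_bot_add_single_top_mem_lexSeg (h0 : IsBot i0) (hN : IsTop iN) (hu : deg u = d)
    (hu0 : 0 < u i0) (hv0 : v i0 = 0) (hd : 1 ≤ d) :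
    Finsupp.single i0 1 + Finsupp.single iN (d - 1) ∈ lexSeg d u v := by
  refine ⟨by simp only [deg_eq_degree, map_add, Finsupp.degree_single]; omega, (toLex_lt_of_apply_bot_lt h0 (by simp [hv0])).le, ?_⟩
  obtain ⟨u', rfl⟩ := le_iff_exists_add.mp (Finsupp.single_le_iff.mpr (show 1 ≤ u i0 from hu0))
  have hu' : deg u' = d - 1 := by
    simp only [deg_eq_degree, map_add, Finsupp.degree_single] at hu ⊢; omega
  change toLex _ ≤ toLex _
  rw [toLex_add, toLex_add]
  exact add_le_add_right (toLex_single_top_le hN hu') _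

end LexSeg

section Socle

variable {k : Type*} [Field k] {n d t : ℕ} {i0 i1 iN : Fin n} {u v : Fin n →₀ ℕ}

lemma mon_mem_lexIdeal {a : Fin n →₀ ℕ} (ha : a ∈ lexSeg d u v) : mon k a ∈ lexIdeal k d u v :=
  Ideal.subset_span ⟨a, ha, rfl⟩

lemma X_eq_mon {σ : Type*} (i : σ) : (X i : MvPolynomial σ k) = mon k (Finsupp.single i 1) := rfl

lemma nsmul_add_tsub_right {σ : Type*} (a b : σ →₀ ℕ) (ht : 1 ≤ t) :
    t • (a + b) - b = (t - 1) • (a + b) + a := by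
  obtain ⟨s, rfl⟩ := Nat.exists_eq_add_of_le' ht
  rw [succ_nsmul, ← add_assoc, add_tsub_cancel_right, Nat.add_sub_cancel]

lemma deg_nsmul_add_single_tsub_single_lt (i1 iN : Fin n) (hd : 1 ≤ d) (ht : 1 ≤ t) :
    deg (t • (Finsupp.single i1 (d - 1) + Finsupp.single iN 1) - Finsupp.single iN 1) < d * t := by
  rw [nsmul_add_tsub_right _ _ ht]
  simp only [deg_eq_degree, map_add, map_nsmul, Finsupp.degree_single, smul_eq_mul]
  obtain ⟨e, rfl⟩ := Nat.exists_eq_add_of_le' hd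
  obtain ⟨s, rfl⟩ := Nat.exists_eq_add_of_le' ht
  simp only [Nat.add_sub_cancel]
  nlinarith

lemma X_mul_mem_lexIdeal_pow_of_ne_bot (h0 : IsBot i0) (hN : IsTop iN) (hi1 : i1 ≠ i0)
    (hiN : iN ≠ i0) (hu0 : 0 < u i0) (hd : 1 ≤ d)
    (hv : lexLe v (Finsupp.single i1 (d - 1) + Finsupp.single iN 1)) (ht : 1 ≤ t)
    {i : Fin n} (hi : i ≠ i0) :
    X i * mon k (t • (Finsupp.single i1 (d - 1) + Finsupp.single iN 1) - Finsupp.single iN 1)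
      ∈ lexIdeal k d u v ^ t := by
  set g := Finsupp.single i1 (d - 1) + Finsupp.single iN 1
  obtain ⟨s, rfl⟩ := Nat.exists_eq_add_of_le' ht
  have hfactor : X i * mon k ((s + 1) • g - Finsupp.single iN 1) =
      mon k (Finsupp.single i1 (d - 1) + Finsupp.single i 1) * mon k g ^ s := by
    rw [nsmul_add_tsub_right _ _ ht, X_eq_mon, mon_pow, mon_mul, mon_mul, Nat.add_sub_cancel]
    congr 1
    abel
  rw [hfactor, pow_succ']
  exact Ideal.mul_mem_mul
    (mon_mem_lexIdeal (single_add_single_mem_lexSeg h0 hN hi1 hu0 hd hv hi))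
    (Ideal.pow_mem_pow (mon_mem_lexIdeal (single_add_single_mem_lexSeg h0 hN hi1 hu0 hd hv hiN)) s)

lemma X_bot_mul_mem_lexIdeal_pow (h0 : IsBot i0) (hN : IsTop iN) (hi1 : i1 ≠ i0)
    (hiN : iN ≠ i0) (hu : deg u = d) (hu0 : 0 < u i0) (hv0 : v i0 = 0) (hd : 1 ≤ d)
    (hv : lexLe v (Finsupp.single i1 (d - 1) + Finsupp.single iN 1)) (hdt : d ≤ t) :
    X i0 * mon k (t • (Finsupp.single i1 (d - 1) + Finsupp.single iN 1) - Finsupp.single iN 1)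
      ∈ lexIdeal k d u v ^ t := by
  have hg := single_add_single_mem_lexSeg h0 hN hi1 hu0 hd hv hiN
  have hpow := single_add_single_mem_lexSeg h0 hN hi1 hu0 hd hv hi1
  have hlow := single_bot_add_single_top_mem_lexSeg h0 hN hu hu0 hv0 hd
  obtain ⟨e, rfl⟩ := Nat.exists_eq_add_of_le' hd
  obtain ⟨s, rfl⟩ := Nat.exists_eq_add_of_le hdt
  rw [Nat.add_sub_cancel] at hg hpow hlow ⊢
  rw [nsmul_add_tsub_right _ _ (by omega), show e + 1 + s - 1 = e + s by omega]
  have hfactor : X i0 * mon k ((e + s) • (Finsupp.single i1 e + Finsupp.single iN 1) +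
        Finsupp.single i1 e) =
      mon k (Finsupp.single i0 1 + Finsupp.single iN e) *
        (mon k (Finsupp.single i1 e + Finsupp.single i1 1) ^ e *
          mon k (Finsupp.single i1 e + Finsupp.single iN 1) ^ s) := by
    rw [X_eq_mon, mon_pow, mon_pow, mon_mul, mon_mul, mon_mul]
    congr 1
    ext j
    simp only [Finsupp.add_apply, Finsupp.smul_apply, Finsupp.single_apply, smul_eq_mul]
    split_ifs <;> ring
  rw [hfactor, show e + 1 + s = 1 + (e + s) by ring, pow_add, pow_add, pow_one]
  exact Ideal.mul_mem_mul (mon_mem_lexIdeal hlow)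
    (Ideal.mul_mem_mul (Ideal.pow_mem_pow (mon_mem_lexIdeal hpow) e)
      (Ideal.pow_mem_pow (mon_mem_lexIdeal hg) s))

end Socle

theorem statement12 {k : Type*} [Field k] {n d : ℕ} (hn : 2 ≤ n) (hd : 3 ≤ d)
    (u v : Fin n →₀ ℕ) (hu : deg u = d)
    (hx1u : 0 < u (⟨0, by omega⟩ : Fin n)) (hx1v : v (⟨0, by omega⟩ : Fin n) = 0)
    (hvle : lexLe v (Finsupp.single (⟨1, by omega⟩ : Fin n) (d-1) + Finsupp.single (⟨n-1, by omega⟩ : Fin n) 1))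
    (t : ℕ) (ht : d ≤ t) :
    mon k (t • (Finsupp.single (⟨1, by omega⟩ : Fin n) (d-1) + Finsupp.single (⟨n-1, by omega⟩ : Fin n) 1) - Finsupp.single (⟨n-1, by omega⟩ : Fin n) 1)
        ∉ (lexIdeal k d u v) ^ t ∧
    (∀ i : Fin n, X i * mon k (t • (Finsupp.single (⟨1, by omega⟩ : Fin n) (d-1) + Finsupp.single (⟨n-1, by omega⟩ : Fin n) 1) - Finsupp.single (⟨n-1, by omega⟩ : Fin n) 1)
        ∈ (lexIdeal k d u v) ^ t) ∧
    quotDepth k ((lexIdeal k d u v) ^ t) = 0 := by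
  set i0 : Fin n := ⟨0, by omega⟩
  set i1 : Fin n := ⟨1, by omega⟩
  set iN : Fin n := ⟨n - 1, by omega⟩
  have h0 : IsBot i0 := fun j => Nat.zero_le j
  have hN : IsTop iN := fun j => Nat.le_sub_one_of_lt j.2
  have hi1 : i1 ≠ i0 := by simp [i0, i1]
  have hiN : iN ≠ i0 := by simp [i0, iN]; omega
  have hnot : mon k (t • (Finsupp.single i1 (d - 1) + Finsupp.single iN 1) - Finsupp.single iN 1)
      ∉ lexIdeal k d u v ^ t :=
    mon_notMem_lexIdeal_pow (deg_nsmul_add_single_tsub_single_lt i1 iN (by omega) (by omega))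
  have hX (i : Fin n) : X i * mon k (t • (Finsupp.single i1 (d - 1) + Finsupp.single iN 1) -
      Finsupp.single iN 1) ∈ lexIdeal k d u v ^ t := by
    rcases eq_or_ne i i0 with rfl | hi
    · exact X_bot_mul_mem_lexIdeal_pow h0 hN hi1 hiN hu hx1u hx1v (by omega) hvle ht
    · exact X_mul_mem_lexIdeal_pow_of_ne_bot h0 hN hi1 hiN hx1u (by omega) hvle (by omega) hi
  exact ⟨hnot, hX, quotDepth_eq_zero_of_X_mul_mem hnot hX⟩

end LexPaper
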